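/- arXiv:1111.2768 — 4 statements merged into one kernel-verified Lean document; each statement's English description precedes it below -/
import Mathlib

section
/- Let K = ⟨S, s_in, R, L⟩ be a finite Kripke structure, θ₁ a graded-CTL formula, and k ≥ 0. Let G be the directed graph whose vertices are the states of K satisfying E^{>0}Gθ₁ and whose edges are the transitions of R between such states. Then for every state s satisfying E^{>0}Gθ₁: (K,s) ⊨ E^{>k}Gθ₁ if and only if in G either a non-sink-cycle is reachable from s, or there exist k+1 pairwise distinct finite paths connecting s to sink-cycles. -/
/-- A Kripke structure over atomic propositions `AP` with state type `S`:
an initial state, a total transition relation, and a labeling. -/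
structure Kripke (S AP : Type) where
  init : S
  R : S → S → Prop
  total : ∀ s, ∃ t, R s t
  L : S → Set AP

namespace Kripke

variable {S AP : Type}

/-- A finite path: a nonempty list of states with consecutive states related by `R`. -/
def IsFinPath (K : Kripke S AP) (l : List S) : Prop :=
  l ≠ [] ∧ l.Chain' K.R

/-- Two finite paths (as lists) are distinct if they differ at some common index. -/
def FinDistinct (l₁ l₂ : List S) : Prop :=
  ∃ (i : ℕ) (h₁ : i < l₁.length) (h₂ : i < l₂.length), l₁[i] ≠ l₂[i]

/-- An infinite path: a function `ℕ → S` with consecutive states related by `R`. -/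
def IsInfPath (K : Kripke S AP) (π : ℕ → S) : Prop :=
  ∀ n, K.R (π n) (π (n + 1))

/-- Two infinite paths are distinct if they differ at some index. -/
def InfDistinct (π₁ π₂ : ℕ → S) : Prop :=
  ∃ i, π₁ i ≠ π₂ i

end Kripke

/-- Graded-CTL formulas: atoms, negation, conjunction and graded modalities
`E^{>k}Xψ`, `E^{>k}Gψ`, `E^{>k}(ψ₁Uψ₂)`. -/
inductive GCTL (AP : Type) : Type where
  | atom : AP → GCTL AP
  | not  : GCTL AP → GCTL AP
  | and  : GCTL AP → GCTL AP → GCTL AP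
  | EX   : ℕ → GCTL AP → GCTL AP
  | EG   : ℕ → GCTL AP → GCTL AP
  | EU   : ℕ → GCTL AP → GCTL AP → GCTL AP

namespace Kripke

variable {S AP : Type}

/-- Satisfaction of a graded-CTL formula at a state.  `E^{>k}θ` holds iff there are
`k+1` pairwise distinct evidences of the path formula `θ`. -/
def sat (K : Kripke S AP) : GCTL AP → S → Prop
  | .atom p, s => p ∈ K.L s
  | .not φ, s => ¬ K.sat φ s
  | .and φ ψ, s => K.sat φ s ∧ K.sat ψ s
  | .EX k φ, s =>
      ∃ e : Fin (k + 1) → List S,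
        (∀ i, ∃ t, e i = [s, t] ∧ K.R s t ∧ K.sat φ t) ∧
        (∀ i j, i ≠ j → FinDistinct (e i) (e j))
  | .EG k φ, s =>
      ∃ e : Fin (k + 1) → (ℕ → S),
        (∀ i, e i 0 = s ∧ K.IsInfPath (e i) ∧ ∀ n, K.sat φ (e i n)) ∧
        (∀ i j, i ≠ j → InfDistinct (e i) (e j))
  | .EU k φ ψ, s =>
      ∃ e : Fin (k + 1) → List S,
        (∀ i, (e i) ≠ [] ∧ (e i).Chain' K.R ∧ (e i).head? = some s ∧
          (∃ t, (e i).getLast? = some t ∧ K.sat ψ t) ∧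
          (∀ (m : ℕ) (h : m + 1 < (e i).length), K.sat φ ((e i)[m]))) ∧
        (∀ i j, i ≠ j → FinDistinct (e i) (e j))

end Kripke

section Digraph

variable {V : Type}

/-- Out-degree at least 2: two different successors. -/
def OutDegGeTwo (R : V → V → Prop) (v : V) : Prop :=
  ∃ t₁ t₂, t₁ ≠ t₂ ∧ R v t₁ ∧ R v t₂

/-- Out-degree exactly one: a unique successor. -/
def OutDegOne (R : V → V → Prop) (v : V) : Prop :=
  ∃! t, R v t

/-- A (simple) cycle: a nonempty duplicate-free list, consecutive vertices related by `R`,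
and an edge from the last vertex back to the first. -/
def IsCycle (R : V → V → Prop) (l : List V) : Prop :=
  l ≠ [] ∧ l.Nodup ∧ l.Chain' R ∧
    ∃ a b, l.head? = some a ∧ l.getLast? = some b ∧ R b a

/-- A sink-cycle: a cycle all of whose vertices have out-degree 1. -/
def IsSinkCycle (R : V → V → Prop) (l : List V) : Prop :=
  IsCycle R l ∧ ∀ v ∈ l, OutDegOne R v

/-- A non-sink-cycle: a cycle containing a vertex of out-degree at least 2. -/
def IsNonSinkCycle (R : V → V → Prop) (l : List V) : Prop :=
  IsCycle R l ∧ ∃ v ∈ l, OutDegGeTwo R v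

end Digraph

/-- The edge relation of the directed graph `G` induced by the states of `K`
satisfying `E^{>0}Gθ₁`, with the transitions of `R` between such states. -/
def inducedG {S AP : Type} (K : Kripke S AP) (θ₁ : GCTL AP) : S → S → Prop :=
  fun a b => K.R a b ∧ K.sat (.EG 0 θ₁) a ∧ K.sat (.EG 0 θ₁) b

/-!
An evidence of `Gθ₁` is exactly an infinite chain of the induced graph `G`: a path along which
`θ₁` holds forever only visits states satisfying `E^{>0}Gθ₁`. In a finite graph every infinite
chain eventually closes a simple cycle. If that cycle is a non-sink-cycle, one can go around it
any number of times before leaving it through a second successor, which yields infinitely many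
chains from `s`. Otherwise every chain from `s` enters a sink-cycle, after which it is
determined; so distinct chains are distinguished by their prefixes up to that point, and
conversely every finite path into a sink-cycle extends around the cycle.
-/
section InfChain

variable {V : Type} {G : V → V → Prop}

def IsInfChain (G : V → V → Prop) (π : ℕ → V) : Prop :=
  ∀ n, G (π n) (π (n + 1))

theorem IsInfChain.reflTransGen {π : ℕ → V} (hπ : IsInfChain G π) (n : ℕ) :
    Relation.ReflTransGen G (π 0) (π n) := by
  induction n with
  | zero => exact .refl
  | succ n ih => exact ih.tail (hπ n)

def splice (N : ℕ) (f g : ℕ → V) : ℕ → V :=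
  fun n => if n < N then f n else g (n - N)

theorem splice_of_lt {N n : ℕ} (f g : ℕ → V) (hn : n < N) : splice N f g n = f n :=
  if_pos hn

theorem splice_add (N : ℕ) (f g : ℕ → V) (n : ℕ) : splice N f g (N + n) = g n := by
  simp [splice]

theorem splice_of_le {N n : ℕ} {f g : ℕ → V} (hN : f N = g 0) (hn : n ≤ N) :
    splice N f g n = f n := by
  rcases hn.lt_or_eq with hn | rfl
  · exact splice_of_lt f g hn
  · simpa [hN] using splice_add n f g 0

theorem isInfChain_splice {N : ℕ} {f g : ℕ → V} (hf : ∀ n < N, G (f n) (f (n + 1)))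
    (hN : f N = g 0) (hg : IsInfChain G g) : IsInfChain G (splice N f g) := by
  intro n
  rcases lt_or_ge n N with h | h
  · rw [splice_of_le hN h.le, splice_of_le hN h]
    exact hf n h
  · obtain ⟨m, rfl⟩ := Nat.exists_eq_add_of_le h
    rw [add_assoc, splice_add, splice_add]
    exact hg m

theorem exists_finChain_of_reflTransGen {a b : V} (h : Relation.ReflTransGen G a b) :
    ∃ (N : ℕ) (f : ℕ → V), f 0 = a ∧ f N = b ∧ ∀ n < N, G (f n) (f (n + 1)) := by
  induction h with
  | refl => exact ⟨0, fun _ => a, rfl, rfl, by simp⟩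
  | @tail b c _ hbc ih =>
    obtain ⟨N, f, hf0, hfN, hf⟩ := ih
    refine ⟨N + 1, splice (N + 1) f fun _ => c, by simp [splice, hf0], splice_add _ _ _ 0,
      fun n hn => ?_⟩
    rw [splice_of_lt f _ hn]
    rcases (Nat.lt_succ_iff.mp hn).lt_or_eq with hn | rfl
    · rw [splice_of_lt f _ (by omega)]
      exact hf n hn
    · rw [splice_add _ _ _ 0, hfN]
      exact hbc

theorem exists_isInfChain_of_rel (hsucc : ∀ a b, G a b → ∃ c, G b c) {a b : V} (hab : G a b) :
    ∃ π, IsInfChain G π ∧ π 0 = a ∧ π 1 = b := by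
  choose next hnext using hsucc
  let step : {p : V × V // G p.1 p.2} → {p : V × V // G p.1 p.2} :=
    fun p => ⟨(p.1.2, next _ _ p.2), hnext _ _ p.2⟩
  refine ⟨fun n => (step^[n] ⟨(a, b), hab⟩).1.1, fun n => ?_, rfl, rfl⟩
  simp only [Function.iterate_succ_apply']
  exact (step^[n] ⟨(a, b), hab⟩).2

theorem List.IsChain.exists_isInfChain_extend {l : List V} (hl : l.IsChain G) {π : ℕ → V}
    (hπ : IsInfChain G π) (hlast : l.getLast? = some (π 0)) :
    ∃ ρ, IsInfChain G ρ ∧ ∀ n (hn : n < l.length), ρ n = l[n] := by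
  have hne : l ≠ [] := by rintro rfl; simp at hlast
  have hpos : 0 < l.length := List.length_pos_iff.mpr hne
  let f : ℕ → V := fun n => l[n]?.getD (π 0)
  have hf : ∀ n (hn : n < l.length), f n = l[n] := fun n hn => by simp [f, hn]
  have hfN : f (l.length - 1) = π 0 := by
    rw [List.getLast?_eq_getElem?, List.getElem?_eq_getElem (by omega)] at hlast
    rw [hf _ (by omega), Option.some_inj.mp hlast]
  refine ⟨splice (l.length - 1) f π, isInfChain_splice (fun n hn => ?_) hfN hπ, fun n hn => ?_⟩
  · rw [hf n (by omega), hf (n + 1) (by omega)]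
    exact List.isChain_iff_getElem.mp hl n (by omega)
  · rw [splice_of_le hfN (by omega), hf n hn]

end InfChain

section Cycle

variable {V : Type} {G : V → V → Prop}

theorem IsCycle.rel_getElem_mod {l : List V} (hC : IsCycle G l) (j : ℕ) (hj : j < l.length) :
    G l[j] (l[(j + 1) % l.length]'(Nat.mod_lt _ (by omega))) := by
  obtain ⟨-, -, hch, a, b, ha, hb, hba⟩ := hC
  rcases (Nat.succ_le_of_lt hj).lt_or_eq with h | h
  · simpa [Nat.mod_eq_of_lt h] using List.isChain_iff_getElem.mp hch j h
  · rw [List.head?_eq_getElem?, List.getElem?_eq_getElem (by omega), Option.some_inj] at ha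
    rw [List.getLast?_eq_getElem?, List.getElem?_eq_getElem (by omega), Option.some_inj] at hb
    convert hba using 1
    · simp [← hb, ← h]
    · simp [← ha, ← h]

theorem IsCycle.exists_periodic_isInfChain {l : List V} (hC : IsCycle G l) {v : V} (hv : v ∈ l) :
    ∃ γ, IsInfChain G γ ∧ γ 0 = v ∧ Function.Periodic γ l.length ∧ ∀ u ∈ l, ∃ n, γ n = u := by
  obtain ⟨m, hm, rfl⟩ := List.mem_iff_getElem.mp hv
  have hpos : 0 < l.length := by omega
  refine ⟨fun n => l[(m + n) % l.length]'(Nat.mod_lt _ hpos), fun n => ?_,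
    by simp [Nat.mod_eq_of_lt hm], fun n => by simp [← add_assoc], fun u hu => ?_⟩
  · simpa [Nat.mod_add_mod, add_assoc] using hC.rel_getElem_mod _ (Nat.mod_lt (m + n) hpos)
  · obtain ⟨j, hj, rfl⟩ := List.mem_iff_getElem.mp hu
    exact ⟨j + l.length - m, by simp [show m + (j + l.length - m) = j + l.length by omega,
      Nat.mod_eq_of_lt hj]⟩

theorem IsSinkCycle.mem_of_rel {l : List V} (hC : IsSinkCycle G l) {v w : V} (hv : v ∈ l)
    (hvw : G v w) : w ∈ l := by
  obtain ⟨j, hj, rfl⟩ := List.mem_iff_getElem.mp hv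
  obtain ⟨u, -, hu⟩ := hC.2 _ hv
  rw [hu w hvw, ← hu _ (hC.1.rel_getElem_mod j hj)]
  exact List.getElem_mem _

theorem IsSinkCycle.eq_of_forall_le_eq {C : List V} (hC : IsSinkCycle G C) {π ρ : ℕ → V}
    (hπ : IsInfChain G π) (hρ : IsInfChain G ρ) {a : ℕ} (ha : π a ∈ C)
    (h : ∀ m ≤ a, π m = ρ m) : π = ρ := by
  have key : ∀ n, a ≤ n → π n = ρ n ∧ π n ∈ C := by
    intro n hn
    induction n, hn using Nat.le_induction with
    | base => exact ⟨h a le_rfl, ha⟩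
    | succ n _ ih =>
      obtain ⟨u, -, hu⟩ := hC.2 _ ih.2
      refine ⟨?_, hC.mem_of_rel ih.2 (hπ n)⟩
      rw [hu _ (hπ n), ← hu _ (ih.1 ▸ hρ n)]
  funext n
  rcases le_total n a with hn | hn
  exacts [h n hn, (key n hn).1]

theorem isCycle_map_range {f : ℕ → V} {d : ℕ} (hd : 0 < d) (hf : IsInfChain G f)
    (hper : f d = f 0) (hinj : Set.InjOn f (Set.Iio d)) :
    IsCycle G ((List.range d).map f) := by
  refine ⟨by simp; omega, List.Nodup.map_on (fun x hx y hy => hinj (by simpa using hx)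
    (by simpa using hy)) List.nodup_range, ?_, f 0, f (d - 1), ?_, ?_, ?_⟩
  · show List.IsChain _ _
    rw [List.isChain_map, List.isChain_range]
    exact fun m _ => hf m
  · simp [List.head?_range, hd.ne']
  · simp [List.getLast?_range, hd.ne']
  · simpa [Nat.sub_add_cancel hd, hper] using hf (d - 1)

theorem IsInfChain.exists_isCycle [Finite V] {π : ℕ → V} (hπ : IsInfChain G π) :
    ∃ a C, IsCycle G C ∧ π a ∈ C ∧ ∀ v ∈ C, ∃ n, π n = v := by
  classical
  have hrep : ∃ d, 0 < d ∧ ∃ a, π (a + d) = π a := by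
    obtain ⟨x, y, hxy, h⟩ := Finite.exists_ne_map_eq_of_infinite π
    rcases lt_or_gt_of_ne hxy with hlt | hlt
    · exact ⟨y - x, by omega, x, by rw [Nat.add_sub_cancel' hlt.le]; exact h.symm⟩
    · exact ⟨x - y, by omega, y, by rw [Nat.add_sub_cancel' hlt.le]; exact h⟩
  obtain ⟨hd, a, hper⟩ := Nat.find_spec hrep
  -- a repetition inside the loop would be a shorter period
  have hinj : Set.InjOn (fun m => π (a + m)) (Set.Iio (Nat.find hrep)) := by
    intro x hx y hy hxy
    by_contra hne
    wlog hlt : x < y generalizing x y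
    · exact this hy hx hxy.symm (Ne.symm hne) (by omega)
    simp only [Set.mem_Iio] at hx hy
    refine Nat.find_min hrep (show y - x < Nat.find hrep by omega) ⟨by omega, a + x, ?_⟩
    simpa [show a + x + (y - x) = a + y by omega] using hxy.symm
  refine ⟨a, _, isCycle_map_range hd (fun m => ?_) (by simpa using hper) hinj,
    List.mem_map.mpr ⟨0, by simp [hd], rfl⟩, fun v hv => ?_⟩
  · simpa [add_assoc] using hπ (a + m)
  · obtain ⟨m, -, rfl⟩ := List.mem_map.mp hv
    exact ⟨a + m, rfl⟩

theorem IsInfChain.nonSinkCycle_or_sinkCycle [Finite V] {π : ℕ → V} (hπ : IsInfChain G π) :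
    (∃ l v, IsNonSinkCycle G l ∧ v ∈ l ∧ Relation.ReflTransGen G (π 0) v) ∨
      ∃ n C, IsSinkCycle G C ∧ π n ∈ C := by
  obtain ⟨a, C, hC, ha, hCπ⟩ := hπ.exists_isCycle
  by_cases hbr : ∃ v ∈ C, OutDegGeTwo G v
  · obtain ⟨v, hv, hv2⟩ := hbr
    obtain ⟨n, rfl⟩ := hCπ v hv
    exact Or.inl ⟨C, π n, ⟨hC, _, hv, hv2⟩, hv, hπ.reflTransGen n⟩
  · push Not at hbr
    refine Or.inr ⟨a, C, ⟨hC, fun v hv => ?_⟩, ha⟩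
    obtain ⟨γ, hγ, rfl, -⟩ := hC.exists_periodic_isInfChain hv
    exact ⟨γ 1, hγ 0, fun u hu => by_contra fun hne => hbr _ hv ⟨u, γ 1, hne, hu, hγ 0⟩⟩

end Cycle

section Families

variable {V : Type} {G : V → V → Prop}

def infChainsFrom (G : V → V → Prop) (s : V) : Set (ℕ → V) :=
  {π | π 0 = s ∧ IsInfChain G π}

theorem infinite_infChainsFrom_of_branch {w : V} {γ β : ℕ → V} {L : ℕ} (hL : 0 < L)
    (hγ : IsInfChain G γ) (hγ0 : γ 0 = w) (hper : Function.Periodic γ L)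
    (hβ : IsInfChain G β) (hβ0 : β 0 = w) (hβ1 : β 1 ≠ γ 1) :
    (infChainsFrom G w).Infinite := by
  have hγL : ∀ i, γ (i * L) = β 0 := fun i => by simpa [hγ0, hβ0] using hper.nat_mul_eq i
  refine Set.infinite_of_injective_forall_mem (f := fun i => splice (i * L) γ β)
    (fun i j hij => ?_) fun i => ⟨?_, isInfChain_splice (fun n _ => hγ n) (hγL i) hβ⟩
  · -- the `i`-th chain leaves the loop after `i` rounds, while all later chains are still on it
    by_contra hne
    wlog hlt : i < j generalizing i j
    · exact this j i hij.symm (Ne.symm hne) (by omega)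
    have hi : splice (i * L) γ β (i * L + 1) = β 1 := splice_add _ _ _ 1
    have hj : splice (j * L) γ β (i * L + 1) = γ 1 := by
      have hround : (i + 1) * L ≤ j * L := Nat.mul_le_mul_right L hlt
      rw [splice_of_le (hγL j) (by rw [add_one_mul] at hround; omega), add_comm]
      simpa using hper.nat_mul i 1
    exact hβ1 (hi.symm.trans ((congrFun hij _).trans hj))
  · rw [splice_of_le (hγL i) (Nat.zero_le _), hγ0]

theorem infinite_infChainsFrom_of_reflTransGen {s w : V} (hsw : Relation.ReflTransGen G s w)
    (hw : (infChainsFrom G w).Infinite) : (infChainsFrom G s).Infinite := by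
  obtain ⟨N, f, hf0, hfN, hf⟩ := exists_finChain_of_reflTransGen hsw
  have hinj : Set.InjOn (splice N f) (infChainsFrom G w) := fun π _ ρ _ hπρ =>
    funext fun n => by simpa only [splice_add] using congrFun hπρ (N + n)
  refine (hw.image hinj).mono ?_
  rintro _ ⟨π, ⟨hπ0, hπ⟩, rfl⟩
  have hN : f N = π 0 := hfN.trans hπ0.symm
  exact ⟨by rw [splice_of_le hN (Nat.zero_le _), hf0], isInfChain_splice hf hN hπ⟩

theorem IsNonSinkCycle.infinite_infChainsFrom (hsucc : ∀ a b, G a b → ∃ c, G b c)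
    {l : List V} (hC : IsNonSinkCycle G l) {s v : V} (hv : v ∈ l)
    (hsv : Relation.ReflTransGen G s v) : (infChainsFrom G s).Infinite := by
  obtain ⟨hcyc, w, hw, t₁, t₂, ht, ht₁, ht₂⟩ := hC
  obtain ⟨γ, hγ, hγ0, hper, -⟩ := hcyc.exists_periodic_isInfChain hw
  obtain ⟨d, hwd, hd⟩ : ∃ d, G w d ∧ d ≠ γ 1 := by
    by_cases h : t₁ = γ 1
    · exact ⟨t₂, ht₂, h ▸ ht.symm⟩
    · exact ⟨t₁, ht₁, h⟩
  obtain ⟨β, hβ, hβ0, hβ1⟩ := exists_isInfChain_of_rel hsucc hwd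
  obtain ⟨δ, hδ, rfl, -, hδl⟩ := hcyc.exists_periodic_isInfChain hv
  obtain ⟨n, rfl⟩ := hδl w hw
  exact infinite_infChainsFrom_of_reflTransGen (hsv.trans (hδ.reflTransGen n))
    (infinite_infChainsFrom_of_branch (List.length_pos_of_mem hw) hγ hγ0 hper hβ hβ0 (hβ1 ▸ hd))

theorem Kripke.finDistinct_map_range_iff {π ρ : ℕ → V} {a b : ℕ} :
    Kripke.FinDistinct ((List.range (a + 1)).map π) ((List.range (b + 1)).map ρ) ↔
      ∃ m, m ≤ a ∧ m ≤ b ∧ π m ≠ ρ m := by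
  simp [Kripke.FinDistinct, and_left_comm]

theorem exists_sinkPaths_of_injective [Finite V] {ι : Type*} {s : V} {e : ι → ℕ → V}
    (he : ∀ i, e i ∈ infChainsFrom G s) (hinj : Function.Injective e)
    (hno : ¬ ∃ l v, IsNonSinkCycle G l ∧ v ∈ l ∧ Relation.ReflTransGen G s v) :
    ∃ f : ι → List V, (∀ i, (f i).head? = some s ∧ (f i).IsChain G ∧
        ∃ t C, (f i).getLast? = some t ∧ IsSinkCycle G C ∧ t ∈ C) ∧
      ∀ i j, i ≠ j → Kripke.FinDistinct (f i) (f j) := by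
  have hsink : ∀ i, ∃ n C, IsSinkCycle G C ∧ e i n ∈ C := fun i =>
    (he i).2.nonSinkCycle_or_sinkCycle.resolve_left ((he i).1 ▸ hno)
  choose A C hC hAC using hsink
  refine ⟨fun i => (List.range (A i + 1)).map (e i),
    fun i => ⟨?_, ?_, e i (A i), C i, by simp [List.getLast?_range], hC i, hAC i⟩,
    fun i j hij => ?_⟩
  · simp [List.head?_range, (he i).1]
  · rw [List.isChain_map, List.isChain_range_succ]
    exact fun m _ => (he i).2 m
  · rw [Kripke.finDistinct_map_range_iff]
    by_contra! hagree
    -- once the first of the two chains is on its sink-cycle, both are determined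
    refine hij (hinj ?_)
    rcases le_total (A i) (A j) with h | h
    · exact (hC i).eq_of_forall_le_eq (he i).2 (he j).2 (hAC i)
        fun m hm => hagree m hm (hm.trans h)
    · exact ((hC j).eq_of_forall_le_eq (he j).2 (he i).2 (hAC j)
        fun m hm => (hagree m (hm.trans h) hm).symm).symm

theorem exists_injective_of_sinkPaths {ι : Type*} {s : V} {f : ι → List V}
    (hf : ∀ i, (f i).head? = some s ∧ (f i).IsChain G ∧
        ∃ t C, (f i).getLast? = some t ∧ IsSinkCycle G C ∧ t ∈ C)
    (hd : ∀ i j, i ≠ j → Kripke.FinDistinct (f i) (f j)) :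
    ∃ e : ι → ℕ → V, (∀ i, e i ∈ infChainsFrom G s) ∧ Function.Injective e := by
  have hext : ∀ i, ∃ ρ, IsInfChain G ρ ∧ ∀ n (hn : n < (f i).length), ρ n = (f i)[n] := by
    intro i
    obtain ⟨-, hch, t, C, hlast, hC, ht⟩ := hf i
    obtain ⟨γ, hγ, hγ0, -⟩ := hC.1.exists_periodic_isInfChain ht
    exact hch.exists_isInfChain_extend hγ (hγ0 ▸ hlast)
  choose e he hef using hext
  refine ⟨e, fun i => ⟨?_, he i⟩, fun i j hij => by_contra fun hne => ?_⟩
  · have hhead := (hf i).1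
    rw [List.head?_eq_getElem?] at hhead
    obtain ⟨h0, hs⟩ := List.getElem?_eq_some_iff.mp hhead
    rw [hef i 0 h0, hs]
  · obtain ⟨m, hi, hj, hfm⟩ := hd i j hne
    exact hfm (by rw [← hef i m hi, ← hef j m hj, hij])

theorem exists_injective_infChainsFrom_iff [Finite V] (hsucc : ∀ a b, G a b → ∃ c, G b c)
    (k : ℕ) (s : V) :
    (∃ e : Fin (k + 1) → ℕ → V, (∀ i, e i ∈ infChainsFrom G s) ∧ Function.Injective e) ↔
      ((∃ (l : List V) (v : V), IsNonSinkCycle G l ∧ v ∈ l ∧ Relation.ReflTransGen G s v) ∨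
        ∃ f : Fin (k + 1) → List V, (∀ i, (f i).head? = some s ∧ (f i).IsChain G ∧
            ∃ (t : V) (C : List V), (f i).getLast? = some t ∧ IsSinkCycle G C ∧ t ∈ C) ∧
          ∀ i j, i ≠ j → Kripke.FinDistinct (f i) (f j)) := by
  constructor
  · rintro ⟨e, he, hinj⟩
    by_cases hns : ∃ (l : List V) (v : V), IsNonSinkCycle G l ∧ v ∈ l ∧
        Relation.ReflTransGen G s v
    · exact Or.inl hns
    · exact Or.inr (exists_sinkPaths_of_injective he hinj hns)
  · rintro (⟨l, v, hC, hv, hsv⟩ | ⟨f, hf, hd⟩)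
    · let E := (hC.infinite_infChainsFrom hsucc hv hsv).natEmbedding
      exact ⟨fun i => E i, fun i => (E i).2,
        Subtype.val_injective.comp (E.injective.comp Fin.val_injective)⟩
    · exact exists_injective_of_sinkPaths hf hd

end Families

namespace Kripke

variable {S AP : Type} (K : Kripke S AP) (θ : GCTL AP)

theorem infDistinct_iff_ne {π₁ π₂ : ℕ → S} : InfDistinct π₁ π₂ ↔ π₁ ≠ π₂ :=
  Function.ne_iff.symm

theorem sat_EG_zero_iff {v : S} :
    K.sat (.EG 0 θ) v ↔ ∃ π : ℕ → S, π 0 = v ∧ K.IsInfPath π ∧ ∀ n, K.sat θ (π n) := by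
  simp only [sat]
  exact ⟨fun ⟨e, he, _⟩ => ⟨e 0, he 0⟩, fun ⟨π, hπ⟩ =>
    ⟨fun _ => π, fun _ => hπ, fun i j hij => (hij (Subsingleton.elim (α := Fin 1) i j)).elim⟩⟩

theorem inducedG_exists_succ {a b : S} (h : inducedG K θ a b) : ∃ c, inducedG K θ b c := by
  obtain ⟨π, rfl, hπ, hθ⟩ := (K.sat_EG_zero_iff θ).mp h.2.2
  exact ⟨π 1, hπ 0, h.2.2, (K.sat_EG_zero_iff θ).mpr ⟨fun n => π (1 + n), rfl,
    fun n => hπ (1 + n), fun n => hθ (1 + n)⟩⟩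

theorem isInfChain_inducedG_iff {π : ℕ → S} :
    IsInfChain (inducedG K θ) π ↔ K.IsInfPath π ∧ ∀ n, K.sat θ (π n) := by
  constructor
  · intro hπ
    refine ⟨fun n => (hπ n).1, fun n => ?_⟩
    obtain ⟨ρ, hρ0, -, hθ⟩ := (K.sat_EG_zero_iff θ).mp (hπ n).2.1
    exact hρ0 ▸ hθ 0
  · rintro ⟨hπ, hθ⟩ n
    have hEG : ∀ m, K.sat (.EG 0 θ) (π m) := fun m => (K.sat_EG_zero_iff θ).mpr
      ⟨fun n => π (m + n), rfl, fun n => hπ (m + n), fun n => hθ (m + n)⟩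
    exact ⟨hπ n, hEG n, hEG (n + 1)⟩

theorem sat_EG_iff_exists_injective (k : ℕ) (s : S) :
    K.sat (.EG k θ) s ↔ ∃ e : Fin (k + 1) → ℕ → S,
      (∀ i, e i ∈ infChainsFrom (inducedG K θ) s) ∧ Function.Injective e := by
  simp only [sat, infChainsFrom, Set.mem_ofPred_eq, isInfChain_inducedG_iff, infDistinct_iff_ne,
    Function.injective_iff_pairwise_ne, Pairwise, Function.onFun]

end Kripke

theorem gradedEG_iff_nonSinkCycle_or_paths_general {S AP : Type} [Fintype S]
    (K : Kripke S AP) (θ₁ : GCTL AP) (k : ℕ) (s : S) :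
    K.sat (.EG k θ₁) s ↔
      ((∃ (l : List S) (v : S), IsNonSinkCycle (inducedG K θ₁) l ∧ v ∈ l ∧
          Relation.ReflTransGen (inducedG K θ₁) s v) ∨
       (∃ e : Fin (k + 1) → List S,
          (∀ i, (e i).head? = some s ∧ (e i).Chain' (inducedG K θ₁) ∧
            ∃ (t : S) (C : List S), (e i).getLast? = some t ∧
              IsSinkCycle (inducedG K θ₁) C ∧ t ∈ C) ∧
          (∀ i j, i ≠ j → Kripke.FinDistinct (e i) (e j)))) := by
  rw [K.sat_EG_iff_exists_injective θ₁ k s]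
  exact exists_injective_infChainsFrom_iff (fun _ _ => K.inducedG_exists_succ θ₁) k s

/-- Claim 1: for a state `s` satisfying `E^{>0}Gθ₁`, `(K,s) ⊨ E^{>k}Gθ₁` iff, in the
graph induced by the states satisfying `E^{>0}Gθ₁`, either a non-sink-cycle is reachable
from `s`, or there are `k+1` pairwise distinct finite paths connecting `s` to
sink-cycles. -/
theorem gradedEG_iff_nonSinkCycle_or_paths {S AP : Type} [Fintype S]
    (K : Kripke S AP) (θ₁ : GCTL AP) (k : ℕ) (s : S)
    (hs : K.sat (.EG 0 θ₁) s) :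
    K.sat (.EG k θ₁) s ↔
      ((∃ (l : List S) (v : S), IsNonSinkCycle (inducedG K θ₁) l ∧ v ∈ l ∧
          Relation.ReflTransGen (inducedG K θ₁) s v) ∨
       (∃ e : Fin (k + 1) → List S,
          (∀ i, (e i).head? = some s ∧ (e i).Chain' (inducedG K θ₁) ∧
            ∃ (t : S) (C : List S), (e i).getLast? = some t ∧
              IsSinkCycle (inducedG K θ₁) C ∧ t ∈ C) ∧
          (∀ i j, i ≠ j → Kripke.FinDistinct (e i) (e j)))) :=
  gradedEG_iff_nonSinkCycle_or_paths_general K θ₁ k s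
end

section
/- Let K = ⟨S, s_in, R, L⟩ be a finite Kripke structure, θ₁, θ₂ graded-CTL formulas, and k ≥ 0. Let G be the directed graph whose vertices are the states of K satisfying E^{>0}(θ₁Uθ₂) and whose edges are the transitions of R between such states, except that all edges outgoing from states where θ₁ does not hold are deleted. Then for every state s satisfying E^{>0}(θ₁Uθ₂): (K,s) ⊨ E^{>k}(θ₁Uθ₂) if and only if in G either a non-sink-cycle is reachable from s, or there exist k+1 pairwise distinct finite paths connecting s to states where θ₂ holds. -/
/-- The edge relation of the directed graph `G` induced by the states of `K`
satisfying `E^{>0}(θ₁Uθ₂)`, with the transitions of `R` between such states, where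
all edges outgoing from states not satisfying `θ₁` are deleted. -/
def inducedU {S AP : Type} (K : Kripke S AP) (θ₁ θ₂ : GCTL AP) : S → S → Prop :=
  fun a b => K.R a b ∧ K.sat (.EU 0 θ₁ θ₂) a ∧ K.sat (.EU 0 θ₁ θ₂) b ∧ K.sat θ₁ a


/-!
Every state on an evidence of `θ₁ U θ₂` satisfies `E^{>0}(θ₁ U θ₂)` (its suffix is an evidence),
and every non-final state satisfies `θ₁`; so the evidences from `s` are exactly the `G`-paths from
`s` to `θ₂`-states, which is the second disjunct. A reachable non-sink-cycle yields a vertex `w`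
reachable from `s` with a cycle successor `u`, so `u ⇝ w`, and a second successor `t ≠ u`, from
which some `θ₂`-state is reachable in `G`. The paths `s ⇝ w (u ⇝ w)ⁿ t ⇝ θ₂` are pairwise
distinct: the `m`-th and the `n`-th one, `m < n`, differ right after the `m`-th return to `w`.
-/

open Function Relation

namespace Kripke

variable {V : Type}

theorem FinDistinct.symm {l₁ l₂ : List V} (h : FinDistinct l₁ l₂) : FinDistinct l₂ l₁ :=
  let ⟨i, h₁, h₂, hne⟩ := h
  ⟨i, h₂, h₁, hne.symm⟩

theorem finDistinct_cons_cons {a b : V} (l₁ l₂ : List V) (h : a ≠ b) :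
    FinDistinct (a :: l₁) (b :: l₂) :=
  ⟨0, by simp, by simp, h⟩

theorem FinDistinct.append_left {l₁ l₂ : List V} (h : FinDistinct l₁ l₂) (p : List V) :
    FinDistinct (p ++ l₁) (p ++ l₂) := by
  obtain ⟨i, h₁, h₂, hne⟩ := h
  refine ⟨p.length + i, by simpa, by simpa, ?_⟩
  simpa [List.getElem_append_right] using hne

end Kripke

open Kripke

section Paths

variable {V : Type} {r : V → V → Prop}

def IsPathFromTo (r : V → V → Prop) (s : V) (P : V → Prop) (l : List V) : Prop :=
  l.head? = some s ∧ l.IsChain r ∧ ∃ t, l.getLast? = some t ∧ P t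

theorem pairwise_finDistinct_iterate_append {D E : List V} (hDE : D.head? ≠ E.head?)
    (hD : D ≠ []) (hE : E ≠ []) :
    Pairwise (FinDistinct on fun n => (D ++ ·)^[n] E) := by
  have hlt : ∀ m n, m < n → FinDistinct ((D ++ ·)^[m] E) ((D ++ ·)^[n] E) := by
    intro m
    induction m with
    | zero =>
      rintro (_ | n) hn
      · omega
      obtain ⟨d, D, rfl⟩ := List.exists_cons_of_ne_nil hD
      obtain ⟨e, E, rfl⟩ := List.exists_cons_of_ne_nil hE
      rw [Function.iterate_succ_apply']
      exact finDistinct_cons_cons _ _ (fun h => hDE (by simp [h]))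
    | succ m ih =>
      rintro (_ | n) hn
      · omega
      simp only [Function.iterate_succ_apply']
      exact (ih n (by omega)).append_left D
  intro m n hmn
  rcases hmn.lt_or_gt with h | h
  exacts [hlt m n h, (hlt n m h).symm]

theorem isChain_cons_iterate_append {w z : V} {D E : List V} (hD : (w :: D).IsChain r)
    (hDw : D.getLast? = some w) (hE : (w :: E).IsChain r) (hEz : E.getLast? = some z)
    (n : ℕ) : (w :: (D ++ ·)^[n] E).IsChain r ∧ ((D ++ ·)^[n] E).getLast? = some z := by
  induction n with
  | zero => exact ⟨hE, hEz⟩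
  | succ n ih =>
    obtain ⟨hchain, hlast⟩ := ih
    rw [Function.iterate_succ_apply', ← List.cons_append, List.getLast?_append, hlast]
    refine ⟨List.isChain_append.2 ⟨hD, (List.isChain_cons.1 hchain).2, ?_⟩, rfl⟩
    intro x hx
    obtain rfl : w = x := by simpa [List.getLast?_cons, hDw] using hx
    exact (List.isChain_cons.1 hchain).1

theorem exists_pairwise_finDistinct_isPathFromTo {P : V → Prop} {s w u t : V} {E : List V}
    (hsw : ReflTransGen r s w) (hwu : r w u) (huw : ReflTransGen r u w) (hwt : r w t)
    (htu : t ≠ u) (hE : IsPathFromTo r t P E) :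
    ∃ F : ℕ → List V, (∀ n, IsPathFromTo r s P (F n)) ∧ Pairwise (FinDistinct on F) := by
  obtain ⟨q, hq, hqw⟩ := List.exists_isChain_cons_of_relationReflTransGen hsw
  obtain ⟨p, hp⟩ := List.getLast?_eq_some_iff.1
    ((List.getLast_eq_iff_getLast?_eq_some _).1 hqw)
  obtain ⟨D, hD, hDw⟩ := List.exists_isChain_cons_of_relationReflTransGen huw
  obtain ⟨hEt, hE, z, hEz, hz⟩ := hE
  obtain ⟨E, rfl⟩ := List.head?_eq_some_iff.1 hEt
  have hpump := isChain_cons_iterate_append (.cons_cons hwu hD)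
    ((List.getLast_eq_iff_getLast?_eq_some _).1 hDw) (.cons_cons hwt hE) hEz
  have hdist := pairwise_finDistinct_iterate_append (D := u :: D) (E := t :: E)
    (by simpa using htu.symm) (List.cons_ne_nil _ _) (List.cons_ne_nil _ _)
  refine ⟨fun n => p ++ [w] ++ (u :: D ++ ·)^[n] (t :: E), fun n => ⟨?_, ?_, z, ?_, hz⟩,
    fun m n hmn => (hdist hmn).append_left _⟩
  · dsimp only
    rw [← hp]
    rfl
  · exact (hp ▸ hq).append_overlap (hpump n).1 (List.cons_ne_nil _ _)
  · dsimp only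
    rw [List.getLast?_append, (hpump n).2]
    rfl

theorem IsCycle.reflTransGen_of_mem {l : List V} (hl : IsCycle r l) {x y : V} (hx : x ∈ l)
    (hy : y ∈ l) : ReflTransGen r x y := by
  obtain ⟨hne, -, hchain, a, b, ha, hb, hba⟩ := hl
  have hxb : ReflTransGen r x b := (List.getLast_eq_iff_getLast?_eq_some hne).2 hb ▸
    hchain.backwards_induction (ReflTransGen r · (l.getLast hne)) l
      (fun _ _ h₁ h₂ => h₂.head h₁) (fun _ => .refl) x hx
  have hay : ReflTransGen r a y := (List.head_eq_iff_head?_eq_some hne).2 ha ▸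
    hchain.induction (ReflTransGen r (l.head hne)) l
      (fun _ _ h₁ h₂ => h₂.tail h₁) (fun _ => .refl) y hy
  exact (hxb.tail hba).trans hay

theorem IsCycle.exists_rel_reflTransGen {l : List V} (hl : IsCycle r l) {w : V} (hw : w ∈ l) :
    ∃ u, r w u ∧ ReflTransGen r u w := by
  obtain ⟨-, -, hchain, a, b, ha, hb, hba⟩ := id hl
  have hclosed : (l ++ [a]).IsChain r := List.isChain_append.2 ⟨hchain, .singleton a,
    fun x hx y hy => by
      rw [hb, Option.mem_some_iff] at hx
      rw [List.head?_singleton, Option.mem_some_iff] at hy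
      exact hx ▸ hy ▸ hba⟩
  obtain ⟨p, q, hl_eq⟩ := List.append_of_mem hw
  obtain ⟨u, q', hq⟩ := List.exists_cons_of_ne_nil (List.append_ne_nil_of_right_ne_nil q
    (List.cons_ne_nil a []))
  have hwu : r w u := by
    rw [hl_eq, List.append_assoc, List.cons_append, hq] at hclosed
    exact (List.isChain_cons_cons.1 (List.isChain_append.1 hclosed).2.1).1
  have hu : u ∈ l := by
    have : u ∈ q ++ [a] := hq ▸ List.mem_cons_self
    rcases List.mem_append.1 this with h | h
    · exact hl_eq ▸ List.mem_append_right p (List.mem_cons_of_mem w h)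
    · exact (List.mem_singleton.1 h) ▸ List.mem_of_mem_head? ha
  exact ⟨u, hwu, hl.reflTransGen_of_mem hu hw⟩

theorem IsNonSinkCycle.exists_branch_of_reflTransGen {l : List V} (hl : IsNonSinkCycle r l)
    {s v : V} (hv : v ∈ l) (hsv : ReflTransGen r s v) :
    ∃ w u t, ReflTransGen r s w ∧ r w u ∧ ReflTransGen r u w ∧ r w t ∧ t ≠ u := by
  obtain ⟨hc, w, hw, t₁, t₂, hne, h₁, h₂⟩ := hl
  obtain ⟨u, hwu, huw⟩ := hc.exists_rel_reflTransGen hw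
  have hsw := hsv.trans (hc.reflTransGen_of_mem hv hw)
  by_cases h : t₁ = u
  · exact ⟨w, u, t₂, hsw, hwu, huw, h₂, fun h' => hne (h.trans h'.symm)⟩
  · exact ⟨w, u, t₁, hsw, hwu, huw, h₁, h⟩

end Paths

namespace Kripke

variable {S AP : Type} {K : Kripke S AP} {θ₁ θ₂ : GCTL AP} {s : S} {l : List S}

variable (K θ₁ θ₂) in
def IsEUEvidence (s : S) (l : List S) : Prop :=
  l ≠ [] ∧ l.IsChain K.R ∧ l.head? = some s ∧ (∃ t, l.getLast? = some t ∧ K.sat θ₂ t) ∧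
    ∀ (m : ℕ) (h : m + 1 < l.length), K.sat θ₁ l[m]

theorem sat_EU_iff {k : ℕ} : K.sat (.EU k θ₁ θ₂) s ↔ ∃ e : Fin (k + 1) → List S,
    (∀ i, K.IsEUEvidence θ₁ θ₂ s (e i)) ∧ ∀ i j, i ≠ j → FinDistinct (e i) (e j) :=
  Iff.rfl

theorem IsEUEvidence.sat_EU_zero (h : K.IsEUEvidence θ₁ θ₂ s l) : K.sat (.EU 0 θ₁ θ₂) s :=
  ⟨fun _ => l, fun _ => h, fun i j hij => absurd (Fin.ext (by omega)) hij⟩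

theorem IsEUEvidence.drop (h : K.IsEUEvidence θ₁ θ₂ s l) {i : ℕ} (hi : i < l.length) :
    K.IsEUEvidence θ₁ θ₂ l[i] (l.drop i) := by
  obtain ⟨-, hchain, -, ⟨t, hlast, ht⟩, hθ₁⟩ := h
  refine ⟨by simpa using hi, hchain.drop i, by simp [hi], ⟨t, ?_, ht⟩, fun m hm => ?_⟩
  · rwa [List.getLast?_drop, if_neg (by omega)]
  · simpa using hθ₁ (i + m) (by simp at hm; omega)

theorem isEUEvidence_iff_isPathFromTo :
    K.IsEUEvidence θ₁ θ₂ s l ↔ IsPathFromTo (inducedU K θ₁ θ₂) s (K.sat θ₂) l := by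
  constructor
  · intro h
    obtain ⟨-, hchain, hs, hlast, hθ₁⟩ := id h
    refine ⟨hs, List.isChain_iff_getElem.2 fun m hm => ⟨hchain.getElem m hm,
      (h.drop (by omega)).sat_EU_zero, (h.drop hm).sat_EU_zero, hθ₁ m hm⟩, hlast⟩
  · rintro ⟨hs, hchain, hlast⟩
    exact ⟨by rintro rfl; simp at hs, hchain.imp fun _ _ h => h.1, hs, hlast,
      fun m hm => (hchain.getElem m hm).2.2.2⟩

theorem sat_EU_iff_exists_isPathFromTo {k : ℕ} : K.sat (.EU k θ₁ θ₂) s ↔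
    ∃ e : Fin (k + 1) → List S, (∀ i, IsPathFromTo (inducedU K θ₁ θ₂) s (K.sat θ₂) (e i)) ∧
      ∀ i j, i ≠ j → FinDistinct (e i) (e j) := by
  simp only [sat_EU_iff, isEUEvidence_iff_isPathFromTo]

end Kripke

theorem gradedEU_iff_nonSinkCycle_or_paths_general {S AP : Type}
    (K : Kripke S AP) (θ₁ θ₂ : GCTL AP) (k : ℕ) (s : S) :
    K.sat (.EU k θ₁ θ₂) s ↔
      ((∃ (l : List S) (v : S), IsNonSinkCycle (inducedU K θ₁ θ₂) l ∧ v ∈ l ∧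
          Relation.ReflTransGen (inducedU K θ₁ θ₂) s v) ∨
       (∃ e : Fin (k + 1) → List S,
          (∀ i, (e i).head? = some s ∧ (e i).Chain' (inducedU K θ₁ θ₂) ∧
            ∃ t : S, (e i).getLast? = some t ∧ K.sat θ₂ t) ∧
          (∀ i j, i ≠ j → Kripke.FinDistinct (e i) (e j)))) := by
  rw [Kripke.sat_EU_iff_exists_isPathFromTo]
  refine ⟨Or.inr, ?_⟩
  rintro (⟨l, v, hl, hv, hsv⟩ | hpaths)
  · obtain ⟨w, u, t, hsw, hwu, huw, hwt, htu⟩ := hl.exists_branch_of_reflTransGen hv hsv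
    obtain ⟨e, he, -⟩ := Kripke.sat_EU_iff_exists_isPathFromTo.1 hwt.2.2.1
    obtain ⟨F, hF, hFd⟩ := exists_pairwise_finDistinct_isPathFromTo hsw hwu huw hwt htu (he 0)
    exact ⟨fun i => F i, fun i => hF i, fun i j hij => hFd (Fin.val_injective.ne hij)⟩
  · exact hpaths

/-- Claim 2: for a state `s` satisfying `E^{>0}(θ₁Uθ₂)`, `(K,s) ⊨ E^{>k}(θ₁Uθ₂)` iff, in
the graph induced by the states satisfying `E^{>0}(θ₁Uθ₂)` (with edges from states not
satisfying `θ₁` deleted), either a non-sink-cycle is reachable from `s`, or there are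
`k+1` pairwise distinct finite paths connecting `s` to states where `θ₂` holds. -/
theorem gradedEU_iff_nonSinkCycle_or_paths {S AP : Type} [Fintype S]
    (K : Kripke S AP) (θ₁ θ₂ : GCTL AP) (k : ℕ) (s : S)
    (hs : K.sat (.EU 0 θ₁ θ₂) s) :
    K.sat (.EU k θ₁ θ₂) s ↔
      ((∃ (l : List S) (v : S), IsNonSinkCycle (inducedU K θ₁ θ₂) l ∧ v ∈ l ∧
          Relation.ReflTransGen (inducedU K θ₁ θ₂) s v) ∨
       (∃ e : Fin (k + 1) → List S,
          (∀ i, (e i).head? = some s ∧ (e i).Chain' (inducedU K θ₁ θ₂) ∧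
            ∃ t : S, (e i).getLast? = some t ∧ K.sat θ₂ t) ∧
          (∀ i j, i ≠ j → Kripke.FinDistinct (e i) (e j)))) :=
  gradedEU_iff_nonSinkCycle_or_paths_general K θ₁ θ₂ k s
end

section
/- Graded-CTL strictly extends CTL: for any atomic proposition p, there is no CTL formula φ (built from atomic propositions by ¬, ∧, EXψ₁, EGψ₁, E(ψ₁Uψ₂)) such that for every Kripke structure K and every state s of K, (K,s) ⊨ φ if and only if (K,s) ⊨ E^{>1}Xp. -/
/-- A graded-CTL formula is a (classical) CTL formula when every grading constant
is `0`. -/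
def GCTL.IsCTL {AP : Type} : GCTL AP → Prop
  | .atom _ => True
  | .not φ => φ.IsCTL
  | .and φ ψ => φ.IsCTL ∧ ψ.IsCTL
  | .EX k φ => k = 0 ∧ φ.IsCTL
  | .EG k φ => k = 0 ∧ φ.IsCTL
  | .EU k φ ψ => k = 0 ∧ φ.IsCTL ∧ ψ.IsCTL

/-!
CTL is invariant under bounded morphisms (functional bisimulations): every step of the target
lifts back to a step of the source, so paths lift and the satisfaction of each modality is
preserved. Collapsing the two `p`-successors of the root of a three-state structure onto one
is such a morphism, yet it destroys `E^{>1}Xp` at the root.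
-/

namespace Kripke

variable {S S' AP : Type}

section GradeZero

variable (K : Kripke S AP)

theorem sat_EX_zero (φ : GCTL AP) (s : S) :
    K.sat (.EX 0 φ) s ↔ ∃ t, K.R s t ∧ K.sat φ t := by
  constructor
  · rintro ⟨e, he, -⟩
    obtain ⟨t, -, hst, ht⟩ := he 0
    exact ⟨t, hst, ht⟩
  · rintro ⟨t, hst, ht⟩
    exact ⟨fun _ => [s, t], fun _ => ⟨t, rfl, hst, ht⟩,
      fun i j hij => absurd (Subsingleton.elim (α := Fin 1) i j) hij⟩

theorem sat_EG_zero (φ : GCTL AP) (s : S) :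
    K.sat (.EG 0 φ) s ↔ ∃ π : ℕ → S, π 0 = s ∧ K.IsInfPath π ∧ ∀ n, K.sat φ (π n) := by
  constructor
  · rintro ⟨e, he, -⟩
    exact ⟨e 0, he 0⟩
  · rintro ⟨π, hπ⟩
    exact ⟨fun _ => π, fun _ => hπ, fun i j hij => absurd (Subsingleton.elim (α := Fin 1) i j) hij⟩

/-- The evidence is written `s :: l`, which avoids the `head?`/`getLast?` bookkeeping. -/
theorem sat_EU_zero (φ ψ : GCTL AP) (s : S) :
    K.sat (.EU 0 φ ψ) s ↔ ∃ l : List S, (s :: l).IsChain K.R ∧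
      K.sat ψ ((s :: l).getLast (List.cons_ne_nil s l)) ∧
      ∀ (m : ℕ) (hm : m + 1 < (s :: l).length), K.sat φ (s :: l)[m] := by
  constructor
  · rintro ⟨e, he, -⟩
    obtain ⟨hne, hchain, hhead, ⟨t, hlast, ht⟩, hφ⟩ := he 0
    replace hφ : ∀ m (hm : m + 1 < (e 0).length), K.sat φ ((e 0)[m]'(Nat.lt_of_succ_lt hm)) := hφ
    generalize e 0 = l at hne hchain hhead hlast hφ
    obtain ⟨a, l, rfl⟩ := List.exists_cons_of_ne_nil hne
    obtain rfl : a = s := by simpa using hhead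
    rw [List.getLast?_eq_some_getLast (List.cons_ne_nil a l), Option.some_inj] at hlast
    exact ⟨l, hchain, hlast ▸ ht, hφ⟩
  · rintro ⟨l, hchain, hψ, hφ⟩
    exact ⟨fun _ => s :: l, fun _ => ⟨List.cons_ne_nil s l, hchain, rfl,
      ⟨_, List.getLast?_eq_some_getLast (List.cons_ne_nil s l), hψ⟩, hφ⟩,
      fun i j hij => absurd (Subsingleton.elim (α := Fin 1) i j) hij⟩

end GradeZero

theorem finDistinct_pair_iff {s t₁ t₂ : S} : FinDistinct [s, t₁] [s, t₂] ↔ t₁ ≠ t₂ := by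
  constructor
  · rintro ⟨_ | _ | i, hi, _, hne⟩
    · exact absurd rfl hne
    · exact hne
    · simp at hi
  · exact fun hne => ⟨1, by simp, by simp, hne⟩

theorem sat_EX_one (K : Kripke S AP) (φ : GCTL AP) (s : S) :
    K.sat (.EX 1 φ) s ↔
      ∃ t₁ t₂, t₁ ≠ t₂ ∧ K.R s t₁ ∧ K.R s t₂ ∧ K.sat φ t₁ ∧ K.sat φ t₂ := by
  constructor
  · rintro ⟨e, he, hdistinct⟩
    obtain ⟨t₁, he₀, hst₁, ht₁⟩ := he 0
    obtain ⟨t₂, he₁, hst₂, ht₂⟩ := he 1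
    have hne := hdistinct 0 1 (by decide)
    rw [he₀, he₁, finDistinct_pair_iff] at hne
    exact ⟨t₁, t₂, hne, hst₁, hst₂, ht₁, ht₂⟩
  · rintro ⟨t₁, t₂, hne, hst₁, hst₂, ht₁, ht₂⟩
    refine ⟨![[s, t₁], [s, t₂]], fun i => ?_, fun i j hij => ?_⟩
    · fin_cases i
      exacts [⟨t₁, rfl, hst₁, ht₁⟩, ⟨t₂, rfl, hst₂, ht₂⟩]
    · fin_cases i <;> fin_cases j
      all_goals first
        | exact absurd rfl hij
        | exact finDistinct_pair_iff.2 hne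
        | exact finDistinct_pair_iff.2 hne.symm

structure IsBoundedMorphism (K : Kripke S AP) (K' : Kripke S' AP) (f : S → S') : Prop where
  label_eq : ∀ s, K'.L (f s) = K.L s
  map_rel : ∀ {s t}, K.R s t → K'.R (f s) (f t)
  exists_rel_of_rel : ∀ {s u}, K'.R (f s) u → ∃ t, K.R s t ∧ f t = u

namespace IsBoundedMorphism

variable {K : Kripke S AP} {K' : Kripke S' AP} {f : S → S'}

theorem exists_chain_lift (hf : IsBoundedMorphism K K' f) {l : List S'} {s : S}
    (hl : (f s :: l).IsChain K'.R) : ∃ l₀ : List S, (s :: l₀).IsChain K.R ∧ l₀.map f = l := by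
  induction l generalizing s with
  | nil => exact ⟨[], List.isChain_singleton s, rfl⟩
  | cons u l ih =>
    obtain ⟨hsu, hl⟩ := List.isChain_cons_cons.1 hl
    obtain ⟨t, hst, rfl⟩ := hf.exists_rel_of_rel hsu
    obtain ⟨l₀, hl₀, rfl⟩ := ih hl
    exact ⟨t :: l₀, List.isChain_cons_cons.2 ⟨hst, hl₀⟩, rfl⟩

theorem exists_path_lift (hf : IsBoundedMorphism K K' f) {π : ℕ → S'} (hπ : K'.IsInfPath π)
    {s : S} (hs : f s = π 0) :
    ∃ σ : ℕ → S, σ 0 = s ∧ K.IsInfPath σ ∧ ∀ n, f (σ n) = π n := by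
  have step : ∀ n (x : {x : S // f x = π n}), ∃ y : {y : S // f y = π (n + 1)}, K.R x y :=
    fun n ⟨x, hx⟩ => by
      obtain ⟨y, hxy, hy⟩ := hf.exists_rel_of_rel (hx ▸ hπ n)
      exact ⟨⟨y, hy⟩, hxy⟩
  choose next hnext using step
  let σ : (n : ℕ) → {x : S // f x = π n} := fun n => Nat.rec ⟨s, hs⟩ next n
  exact ⟨fun n => (σ n).1, rfl, fun n => hnext n (σ n), fun n => (σ n).2⟩

theorem sat_iff (hf : IsBoundedMorphism K K' f) {φ : GCTL AP} (hφ : φ.IsCTL) (s : S) :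
    K'.sat φ (f s) ↔ K.sat φ s := by
  induction φ generalizing s with
  | atom q => simp only [sat, hf.label_eq]
  | not φ ih => simp only [sat, ih hφ]
  | and φ ψ ihφ ihψ => simp only [sat, ihφ hφ.1, ihψ hφ.2]
  | EX k φ ih =>
    obtain ⟨rfl, hφ⟩ := hφ
    simp only [sat_EX_zero]
    constructor
    · rintro ⟨u, hsu, hu⟩
      obtain ⟨t, hst, rfl⟩ := hf.exists_rel_of_rel hsu
      exact ⟨t, hst, (ih hφ t).1 hu⟩
    · rintro ⟨t, hst, ht⟩
      exact ⟨f t, hf.map_rel hst, (ih hφ t).2 ht⟩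
  | EG k φ ih =>
    obtain ⟨rfl, hφ⟩ := hφ
    simp only [sat_EG_zero]
    constructor
    · rintro ⟨π, hπ₀, hπ, hπφ⟩
      obtain ⟨σ, hσ₀, hσ, hσπ⟩ := hf.exists_path_lift hπ hπ₀.symm
      exact ⟨σ, hσ₀, hσ, fun n => (ih hφ (σ n)).1 (hσπ n ▸ hπφ n)⟩
    · rintro ⟨σ, rfl, hσ, hσφ⟩
      exact ⟨f ∘ σ, rfl, fun n => hf.map_rel (hσ n), fun n => (ih hφ (σ n)).2 (hσφ n)⟩
  | EU k φ ψ ihφ ihψ =>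
    obtain ⟨rfl, hφ, hψ⟩ := hφ
    simp only [sat_EU_zero]
    constructor
    · rintro ⟨l, hl, hlψ, hlφ⟩
      obtain ⟨l₀, hl₀, rfl⟩ := hf.exists_chain_lift hl
      refine ⟨l₀, hl₀, (ihψ hψ _).1 ?_, fun m hm => (ihφ hφ _).1 ?_⟩
      · simpa only [← List.map_cons, List.getLast_map] using hlψ
      · simpa only [← List.map_cons, List.getElem_map] using hlφ m (by simpa using hm)
    · rintro ⟨l, hl, hlψ, hlφ⟩
      refine ⟨l.map f, ?_, ?_, fun m hm => ?_⟩
      · simpa only [← List.map_cons] using List.isChain_map_of_isChain f (fun _ _ => hf.map_rel) hl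
      · simpa only [← List.map_cons, List.getLast_map] using (ihψ hψ _).2 hlψ
      · simpa only [← List.map_cons, List.getElem_map] using
          (ihφ hφ _).2 (hlφ m (by simpa using hm))

end IsBoundedMorphism

end Kripke

open Kripke

def oneSuccKripke {AP : Type} (p : AP) : Kripke Bool AP where
  init := false
  R := fun _ t => t = true
  total := fun _ => ⟨true, rfl⟩
  L := fun b => if b then {p} else ∅

def twoSuccKripke {AP : Type} (p : AP) : Kripke (Fin 3) AP where
  init := 0
  R := fun _ t => t ≠ 0
  total := fun _ => ⟨1, by decide⟩
  L := fun x => if x = 0 then ∅ else {p}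

theorem not_oneSuccKripke_sat_EX_one {AP : Type} (p : AP) :
    ¬ (oneSuccKripke p).sat (.EX 1 (.atom p)) false := by
  rw [sat_EX_one]
  rintro ⟨t₁, t₂, hne, h₁ : t₁ = true, h₂ : t₂ = true, -, -⟩
  exact hne (h₁.trans h₂.symm)

theorem twoSuccKripke_sat_EX_one {AP : Type} (p : AP) :
    (twoSuccKripke p).sat (.EX 1 (.atom p)) 0 :=
  (sat_EX_one _ _ _).2 ⟨1, 2, by decide, by simp [twoSuccKripke], by simp [twoSuccKripke],
    by simp [twoSuccKripke, sat], by simp [twoSuccKripke, sat]⟩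

theorem isBoundedMorphism_twoSucc_oneSucc {AP : Type} (p : AP) :
    IsBoundedMorphism (twoSuccKripke p) (oneSuccKripke p) (fun x => decide (x ≠ 0)) where
  label_eq x := by fin_cases x <;> simp [oneSuccKripke, twoSuccKripke]
  map_rel {_ t} (ht : t ≠ 0) := by simpa [oneSuccKripke] using ht
  exists_rel_of_rel {_ u} (hu : u = true) := ⟨1, by simp [twoSuccKripke], by simp [hu]⟩

/-- Graded-CTL strictly extends CTL: no CTL formula is equivalent, over all finite
Kripke structures and states, to `E^{>1}Xp`. -/
theorem no_CTL_formula_equiv_gradedEX {AP : Type} (p : AP) :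
    ¬ ∃ φ : GCTL AP, φ.IsCTL ∧
      ∀ (S : Type) (_ : Fintype S) (K : Kripke S AP) (s : S),
        K.sat φ s ↔ K.sat (.EX 1 (.atom p)) s := by
  rintro ⟨φ, hφ, hequiv⟩
  have hsat_two : (twoSuccKripke p).sat φ 0 :=
    (hequiv _ inferInstance _ _).2 (twoSuccKripke_sat_EX_one p)
  have hsat_one : (oneSuccKripke p).sat φ false :=
    ((isBoundedMorphism_twoSucc_oneSucc p).sat_iff hφ 0).2 hsat_two
  exact not_oneSuccKripke_sat_EX_one p ((hequiv _ inferInstance _ _).1 hsat_one)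
end

section
/- Let M = (M₁,…,M_h) be an SHSM over AP and let P ⊆ AP be a finite set of atomic propositions. Then there exists an HSM M' over AP with at most h·2^{|P|} machines and size at most |M|·2^{|P|} such that the flat Kripke structure (M')^F is isomorphic to M^F up to a renaming of the states, with labels agreeing on all atomic propositions in P. -/
/-- A Scope-dependent Hierarchical State Machine over `AP`.  Machines are indexed by
`Fin h` (index `i` represents the `(i+1)`-st machine `M_{i+1}` of the paper); the
expansion map returns `none` on nodes and `some j` on a box expanding to machine `j`,
with `j < i` (only lower-indexed machines).  Edges are plain edges `(u,v)` (from nodes)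
and box edges `((u,z),v)` (from a box `u` through an output vertex `z`). -/
structure SHSM (AP : Type) where
  h : ℕ
  hpos : 0 < h
  V : Fin h → Type
  Vfin : ∀ i, Fintype (V i)
  init : ∀ i, V i
  out : ∀ i, Set (V i)
  label : ∀ i, V i → Set AP
  expand : ∀ i, V i → Option (Fin h)
  expand_lt : ∀ i u j, expand i u = some j → (j : ℕ) < (i : ℕ)
  init_node : ∀ i, expand i (init i) = none
  out_node : ∀ i, ∀ z ∈ out i, expand i z = none
  Eplain : ∀ i, V i → V i → Prop
  Ebox : ∀ i, V i → ∀ j, V j → V i → Prop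
  Eplain_node : ∀ i u v, Eplain i u v → expand i u = none
  Ebox_ok : ∀ i u j z v, Ebox i u j z v → expand i u = some j ∧ z ∈ out j

namespace SHSM

variable {AP : Type}

instance (M : SHSM AP) (i : Fin M.h) : Fintype (M.V i) := M.Vfin i

/-- The disjoint union of all vertex sets of `M`. -/
abbrev Vt (M : SHSM AP) : Type := Σ i : Fin M.h, M.V i

/-- The index of the top-level machine `M_h`. -/
def top (M : SHSM AP) : Fin M.h := ⟨M.h - 1, Nat.sub_lt M.hpos Nat.one_pos⟩

/-- `x` is a node (it does not expand to any machine). -/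
def IsNode (M : SHSM AP) (x : M.Vt) : Prop := M.expand x.1 x.2 = none

/-- The expansion step relation: `u_{ℓ+1} ∈ V_{expand(u_ℓ)}`. -/
def stepRel (M : SHSM AP) : M.Vt → M.Vt → Prop :=
  fun a b => M.expand a.1 a.2 = some b.1

/-- A well-formed sequence of vertices `u₁ … u_m` (`m ≥ 1`) with
`u_{ℓ+1} ∈ V_{expand(u_ℓ)}`. -/
def WFSeq (M : SHSM AP) (l : List M.Vt) : Prop :=
  l ≠ [] ∧ l.Chain' M.stepRel

/-- A well-formed sequence which starts in machine `j` and ends at a node.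
For `j = M.top` these are exactly the complete well-formed sequences, i.e. the
states of the flat Kripke structure `M^F`; for general `j` they are the states of
the flat Kripke structure of the sub-SHSM `(M₁,…,M_j)`. -/
def CompleteAt (M : SHSM AP) (j : Fin M.h) (l : List M.Vt) : Prop :=
  M.WFSeq l ∧ (∃ x, l.head? = some x ∧ x.1 = j) ∧ (∃ x, l.getLast? = some x ∧ M.IsNode x)

/-- A complete well-formed sequence: a state of the flat Kripke structure `M^F`. -/
def Complete (M : SHSM AP) (l : List M.Vt) : Prop :=
  M.CompleteAt M.top l

/-- The transition relation of the flat Kripke structure `M^F`, given by the four kinds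
of moves induced by the edges of `M`: node to node, node to box, box to node (through an
output vertex), and box to box. -/
def FlatTrans (M : SHSM AP) (X Y : List M.Vt) : Prop :=
  (∃ (p : List M.Vt) (i : Fin M.h) (a b : M.V i),
      X = p ++ [⟨i, a⟩] ∧ Y = p ++ [⟨i, b⟩] ∧
      M.Eplain i a b ∧ M.expand i b = none) ∨
  (∃ (p : List M.Vt) (i : Fin M.h) (a b : M.V i) (j : Fin M.h),
      X = p ++ [⟨i, a⟩] ∧ Y = p ++ [⟨i, b⟩, ⟨j, M.init j⟩] ∧
      M.Eplain i a b ∧ M.expand i b = some j) ∨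
  (∃ (p : List M.Vt) (i : Fin M.h) (a : M.V i) (j : Fin M.h) (z : M.V j) (v : M.V i),
      X = p ++ [⟨i, a⟩, ⟨j, z⟩] ∧ Y = p ++ [⟨i, v⟩] ∧
      M.Ebox i a j z v ∧ M.expand i v = none) ∨
  (∃ (p : List M.Vt) (i : Fin M.h) (a : M.V i) (j : Fin M.h) (z : M.V j) (b : M.V i)
      (j' : Fin M.h),
      X = p ++ [⟨i, a⟩, ⟨j, z⟩] ∧ Y = p ++ [⟨i, b⟩, ⟨j', M.init j'⟩] ∧
      M.Ebox i a j z b ∧ M.expand i b = some j')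

/-- The label of a state of `M^F`: the union of the labels of the vertices occurring
in the sequence. -/
def flatLabel (M : SHSM AP) (l : List M.Vt) : Set AP :=
  {p | ∃ x ∈ l, p ∈ M.label x.1 x.2}

/-- The initial state `⟨in_h⟩` of `M^F`. -/
def initSeq (M : SHSM AP) : List M.Vt := [⟨M.top, M.init M.top⟩]

lemma initSeq_complete (M : SHSM AP) : M.Complete M.initSeq :=
  ⟨⟨by simp [initSeq], by simp only [initSeq]; exact List.isChain_singleton _⟩,
   ⟨⟨M.top, M.init M.top⟩, rfl, rfl⟩,
   ⟨⟨M.top, M.init M.top⟩, by simp [initSeq], M.init_node M.top⟩⟩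

/-- The states of the flat Kripke structure `M^F`. -/
def States (M : SHSM AP) : Type := {l : List M.Vt // M.Complete l}

/-- `M` is an HSM: boxes carry no atomic propositions. -/
def IsHSM (M : SHSM AP) : Prop :=
  ∀ i (u : M.V i), M.expand i u ≠ none → M.label i u = ∅

/-- The size of `M`: total number of vertices plus total number of edges. -/
noncomputable def size (M : SHSM AP) : ℕ :=
  Fintype.card M.Vt
  + {e : Σ i : Fin M.h, M.V i × M.V i | M.Eplain e.1 e.2.1 e.2.2}.ncard
  + {e : Σ (i : Fin M.h) (j : Fin M.h), M.V i × M.V j × M.V i |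
       M.Ebox e.1 e.2.2.1 e.2.1 e.2.2.2.1 e.2.2.2.2}.ncard

/-- `expand⁺`: machine `j` belongs to the iterated expansion of vertex `u`. -/
inductive InExpandPlus (M : SHSM AP) : M.Vt → Fin M.h → Prop where
  | base {i : Fin M.h} {u : M.V i} {j : Fin M.h} :
      M.expand i u = some j → InExpandPlus M ⟨i, u⟩ j
  | step {i : Fin M.h} {u : M.V i} {j : Fin M.h} (u' : M.V j) {j' : Fin M.h} :
      M.expand i u = some j → InExpandPlus M ⟨j, u'⟩ j' → InExpandPlus M ⟨i, u⟩ j'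

/-- `u` is an ancestor of `v`: `v` lies in a machine belonging to `expand⁺(u)`. -/
def Ancestor (M : SHSM AP) (u v : M.Vt) : Prop :=
  M.InExpandPlus u v.1

/-- A restricted SHSM: labels of a vertex and of any of its descendants are disjoint. -/
def Restricted (M : SHSM AP) : Prop :=
  ∀ u v : M.Vt, M.Ancestor u v → M.label u.1 u.2 ∩ M.label v.1 v.2 = ∅

end SHSM

/-- The flat Kripke structures of `M` and `M'` are isomorphic: a bijection of states
mapping the initial state to the initial state and preserving transitions and labels. -/
def FlatIso {AP : Type} (M M' : SHSM AP) : Prop :=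
  ∃ f : M.States ≃ M'.States,
    f ⟨M.initSeq, M.initSeq_complete⟩ = ⟨M'.initSeq, M'.initSeq_complete⟩ ∧
    (∀ X Y : M.States, M.FlatTrans X.1 Y.1 ↔ M'.FlatTrans (f X).1 (f Y).1) ∧
    (∀ X : M.States, M.flatLabel X.1 = M'.flatLabel (f X).1)

/-!
Each machine `M_i` is copied once for every subset `c ⊆ P`; copy `(i, c)` is the one entered
below a stack of boxes whose labels meet `P` in exactly `c`. A box of copy `(i, c)` with label
`L` expands to copy `(j, c ∪ (L ∩ P))`, boxes lose their labels, and a node with label `L` in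
copy `(i, c)` gets the label `L ∪ c`. Along a well-formed sequence the copy of every vertex is
determined by the copy of the first vertex and the labels above it, so forgetting copies is a
bijection from the sequences starting in copy `(h, ∅)` onto those of `M`; it preserves each of
the four kinds of transitions, and the `P`-part of a state label is collected by its last node.
-/

theorem Nat.card_set (α : Type*) [Finite α] : Nat.card (Set α) = 2 ^ Nat.card α := by
  have := Fintype.ofFinite α
  classical
  rw [Nat.card_eq_fintype_card, Fintype.card_set, Nat.card_eq_fintype_card]

theorem Set.ncard_le_ncard_mul_card {α β γ : Type*} [Finite β] [Finite γ] {s : Set α}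
    {t : Set β} (f : α → β × γ) (hf : s.InjOn f) (hst : ∀ a ∈ s, (f a).1 ∈ t) :
    s.ncard ≤ t.ncard * Nat.card γ := by
  calc s.ncard ≤ (t ×ˢ (univ : Set γ)).ncard :=
        ncard_le_ncard_of_injOn f (fun a ha => ⟨hst a ha, trivial⟩) hf
    _ = t.ncard * Nat.card γ := by rw [ncard_prod, ncard_univ]

theorem Equiv.sigma_fst_prod_injective {ι κ γ : Type*} (e : ι ≃ κ × γ)
    (β : κ → Type*) :
    Function.Injective
      fun p : Σ x, β (e x).1 => ((⟨(e p.1).1, p.2⟩ : Σ k, β k), (e p.1).2) := by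
  rintro ⟨x, u⟩ ⟨y, v⟩ h
  simp only [Prod.mk.injEq] at h
  obtain rfl : x = y := e.injective (Prod.ext (congrArg Sigma.fst h.1) h.2)
  simpa using h.1

namespace SHSM

variable {AP : Type}

theorem flatLabel_cons (M : SHSM AP) (a : M.Vt) (l : List M.Vt) :
    M.flatLabel (a :: l) = M.label a.1 a.2 ∪ M.flatLabel l := by
  ext p
  simp [flatLabel]

theorem eplain_cast (M : SHSM AP) {k i : Fin M.h} (h : k = i) (a b : M.V i) :
    M.Eplain k (cast (congrArg M.V h.symm) a) (cast (congrArg M.V h.symm) b) ↔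
      M.Eplain i a b := by
  subst h; rfl

theorem ebox_cast (M : SHSM AP) {k i l j : Fin M.h} (hi : k = i) (hj : l = j) (a v : M.V i)
    (z : M.V j) :
    M.Ebox k (cast (congrArg M.V hi.symm) a) l (cast (congrArg M.V hj.symm) z)
        (cast (congrArg M.V hi.symm) v) ↔ M.Ebox i a j z v := by
  subst hi hj; rfl

variable (M : SHSM AP) (P : Set AP) [Finite P]

/-- An enumeration of the subsets of `P` listing `∅` last, so that copy `(M.top, ∅)` is the top
machine of `M.toHSM P`. -/
noncomputable def ctxEquiv : Set P ≃ Fin (Nat.card (Set P)) :=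
  (Finite.equivFin (Set P)).trans <| Equiv.swap (Finite.equivFin (Set P) ∅)
    ⟨Nat.card (Set P) - 1, Nat.sub_lt Nat.card_pos one_pos⟩

noncomputable def machineEquiv : Fin M.h × Set P ≃ Fin (M.h * Nat.card (Set P)) :=
  ((Equiv.refl _).prodCongr (ctxEquiv P)).trans finProdFinEquiv

noncomputable def copy (i : Fin M.h) (c : Set P) : Fin (M.h * Nat.card (Set P)) :=
  M.machineEquiv P (i, c)

noncomputable def base (x : Fin (M.h * Nat.card (Set P))) : Fin M.h :=
  ((M.machineEquiv P).symm x).1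

noncomputable def ctx (x : Fin (M.h * Nat.card (Set P))) : Set P :=
  ((M.machineEquiv P).symm x).2

@[simp] theorem base_copy (i : Fin M.h) (c : Set P) : M.base P (M.copy P i c) = i := by
  simp [base, copy]

@[simp] theorem ctx_copy (i : Fin M.h) (c : Set P) : M.ctx P (M.copy P i c) = c := by
  simp [ctx, copy]

@[simp] theorem copy_base_ctx (x : Fin (M.h * Nat.card (Set P))) :
    M.copy P (M.base P x) (M.ctx P x) = x := by
  simp [base, ctx, copy]

variable {M P} in
theorem copy_lt_copy {i j : Fin M.h} (c d : Set P) (h : i < j) : M.copy P i c < M.copy P j d := by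
  have hc := (ctxEquiv P c).2
  have hij : (i : ℕ) + 1 ≤ j := h
  simp only [copy, machineEquiv, Equiv.trans_apply, Equiv.prodCongr_apply, Prod.map,
    Equiv.refl_apply, Fin.lt_def, finProdFinEquiv_apply_val]
  nlinarith

noncomputable def toHSM : SHSM AP where
  h := M.h * Nat.card (Set P)
  hpos := Nat.mul_pos M.hpos Nat.card_pos
  V x := M.V (M.base P x)
  Vfin _ := inferInstance
  init x := M.init (M.base P x)
  out x := M.out (M.base P x)
  label x u :=
    if M.expand (M.base P x) u = none then M.label (M.base P x) u ∪ Subtype.val '' M.ctx P x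
    else ∅
  expand x u :=
    (M.expand (M.base P x) u).map (M.copy P · (M.ctx P x ∪ Subtype.val ⁻¹' M.label _ u))
  expand_lt x u y hy := by
    obtain ⟨j, hj, rfl⟩ := Option.map_eq_some_iff.mp hy
    conv_rhs => rw [← M.copy_base_ctx P x]
    exact copy_lt_copy _ _ (M.expand_lt _ _ _ hj)
  init_node x := by simp [M.init_node]
  out_node x z hz := by simp [M.out_node _ z hz]
  Eplain x := M.Eplain (M.base P x)
  Ebox x u y z v :=
    (M.expand (M.base P x) u).map (M.copy P · (M.ctx P x ∪ Subtype.val ⁻¹' M.label _ u)) =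
      some y ∧ M.Ebox (M.base P x) u (M.base P y) z v
  Eplain_node x u v h := by simp [M.Eplain_node _ _ _ h]
  Ebox_ok x u y z v h := ⟨h.1, (M.Ebox_ok _ _ _ _ _ h.2).2⟩

theorem copy_top_empty : M.copy P M.top ∅ = (M.toHSM P).top := by
  obtain ⟨a, ha⟩ := Nat.exists_eq_add_one.mpr M.hpos
  obtain ⟨b, hb⟩ := Nat.exists_eq_add_one.mpr (Nat.card_pos (α := Set P))
  apply Fin.ext
  simp only [copy, machineEquiv, ctxEquiv, Equiv.trans_apply, Equiv.prodCongr_apply, Prod.map,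
    Equiv.refl_apply, Equiv.swap_apply_left, finProdFinEquiv_apply_val, top, toHSM, ha, hb]
  simp only [Nat.add_sub_cancel]
  ring_nf
  omega

theorem base_top : M.base P (M.toHSM P).top = M.top := by
  rw [← copy_top_empty, base_copy]

theorem ctx_top : M.ctx P (M.toHSM P).top = ∅ := by
  rw [← copy_top_empty, ctx_copy]

noncomputable def proj (e : (M.toHSM P).Vt) : M.Vt := ⟨M.base P e.1, e.2⟩

noncomputable def liftVertex (c : Set P) (v : M.Vt) : (M.toHSM P).Vt :=
  ⟨M.copy P v.1 c, cast (congrArg M.V (M.base_copy P v.1 c).symm) v.2⟩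

variable {M P}

theorem expand_toHSM (e : (M.toHSM P).Vt) :
    (M.toHSM P).expand e.1 e.2 = (M.expand (M.proj P e).1 (M.proj P e).2).map
      (M.copy P · (M.ctx P e.1 ∪ Subtype.val ⁻¹' M.label (M.proj P e).1 (M.proj P e).2)) :=
  rfl

theorem label_toHSM (e : (M.toHSM P).Vt) :
    (M.toHSM P).label e.1 e.2 =
      if M.expand (M.proj P e).1 (M.proj P e).2 = none then
        M.label (M.proj P e).1 (M.proj P e).2 ∪ Subtype.val '' M.ctx P e.1
      else ∅ :=
  rfl

theorem isNode_proj (e : (M.toHSM P).Vt) : (M.toHSM P).IsNode e ↔ M.IsNode (M.proj P e) :=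
  Option.map_eq_none_iff

theorem expand_base_eq_some {x y : Fin (M.toHSM P).h} {u : (M.toHSM P).V x}
    (h : (M.toHSM P).expand x u = some y) : M.expand (M.base P x) u = some (M.base P y) := by
  obtain ⟨j, hj, rfl⟩ := Option.map_eq_some_iff.mp h
  rw [base_copy]
  exact hj

theorem stepRel_toHSM_iff {a b : (M.toHSM P).Vt} :
    (M.toHSM P).stepRel a b ↔ M.stepRel (M.proj P a) (M.proj P b) ∧
      M.ctx P b.1 = M.ctx P a.1 ∪ Subtype.val ⁻¹' M.label (M.proj P a).1 (M.proj P a).2 := by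
  rw [stepRel, expand_toHSM]
  constructor
  · intro h
    obtain ⟨j, hj, hb⟩ := Option.map_eq_some_iff.mp h
    show _ = some (M.base P b.1) ∧ _
    rw [← hb, base_copy, ctx_copy]
    exact ⟨hj, rfl⟩
  · rintro ⟨hj, hc⟩
    exact Option.map_eq_some_iff.mpr ⟨_, hj, by rw [← hc]; exact M.copy_base_ctx P b.1⟩

@[simp] theorem proj_liftVertex (c : Set P) (v : M.Vt) : M.proj P (M.liftVertex P c v) = v :=
  Sigma.ext (M.base_copy P v.1 c) (cast_heq _ _)

@[simp] theorem ctx_liftVertex (c : Set P) (v : M.Vt) : M.ctx P (M.liftVertex P c v).1 = c :=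
  M.ctx_copy P v.1 c

theorem liftVertex_proj (e : (M.toHSM P).Vt) : M.liftVertex P (M.ctx P e.1) (M.proj P e) = e :=
  Sigma.ext (M.copy_base_ctx P e.1) (cast_heq _ _)

theorem liftVertex_init (c : Set P) (j : Fin M.h) :
    M.liftVertex P c ⟨j, M.init j⟩ = ⟨M.copy P j c, (M.toHSM P).init (M.copy P j c)⟩ :=
  Sigma.ext rfl ((cast_heq _ _).trans (congr_arg_heq M.init (M.base_copy P j c).symm))

theorem expand_liftVertex (c : Set P) (v : M.Vt) :
    (M.toHSM P).expand (M.liftVertex P c v).1 (M.liftVertex P c v).2 =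
      (M.expand v.1 v.2).map (M.copy P · (c ∪ Subtype.val ⁻¹' M.label v.1 v.2)) := by
  rw [expand_toHSM, proj_liftVertex, ctx_liftVertex]

theorem label_liftVertex (c : Set P) (v : M.Vt) :
    (M.toHSM P).label (M.liftVertex P c v).1 (M.liftVertex P c v).2 =
      if M.expand v.1 v.2 = none then M.label v.1 v.2 ∪ Subtype.val '' c else ∅ := by
  rw [label_toHSM, proj_liftVertex, ctx_liftVertex]

theorem eplain_liftVertex (c : Set P) {i : Fin M.h} (a b : M.V i) :
    (M.toHSM P).Eplain (M.copy P i c) (M.liftVertex P c ⟨i, a⟩).2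
      (M.liftVertex P c ⟨i, b⟩).2 ↔ M.Eplain i a b :=
  M.eplain_cast (M.base_copy P i c) a b

theorem ebox_liftVertex (c : Set P) {i j : Fin M.h} {a v : M.V i} {z : M.V j}
    (h : M.Ebox i a j z v) :
    (M.toHSM P).Ebox (M.copy P i c) (M.liftVertex P c ⟨i, a⟩).2
      (M.copy P j (c ∪ Subtype.val ⁻¹' M.label i a))
      (M.liftVertex P (c ∪ Subtype.val ⁻¹' M.label i a) ⟨j, z⟩).2
      (M.liftVertex P c ⟨i, v⟩).2 := by
  refine ⟨?_, (M.ebox_cast (M.base_copy P i c) (M.base_copy P j _) a v z).2 h⟩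
  exact (expand_liftVertex c ⟨i, a⟩).trans (by rw [(M.Ebox_ok _ _ _ _ _ h).1]; rfl)

variable (M P) in
noncomputable def liftSeq : Set P → List M.Vt → List (M.toHSM P).Vt
  | _, [] => []
  | c, v :: l => M.liftVertex P c v :: liftSeq (c ∪ Subtype.val ⁻¹' M.label v.1 v.2) l

@[simp] theorem map_proj_liftSeq (c : Set P) (l : List M.Vt) :
    (M.liftSeq P c l).map (M.proj P) = l := by
  induction l generalizing c with
  | nil => rfl
  | cons v l ih => simp [liftSeq, ih]

theorem exists_liftSeq_append (c : Set P) (p : List M.Vt) :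
    ∃ t, ∀ l, M.liftSeq P c (p ++ l) = M.liftSeq P c p ++ M.liftSeq P t l := by
  induction p generalizing c with
  | nil => exact ⟨c, fun _ => rfl⟩
  | cons v p ih =>
    obtain ⟨t, ht⟩ := ih (c ∪ Subtype.val ⁻¹' M.label v.1 v.2)
    exact ⟨t, fun l => by simp [liftSeq, ht]⟩

theorem isChain_liftSeq (c : Set P) {l : List M.Vt} (hl : l.IsChain M.stepRel) :
    (M.liftSeq P c l).IsChain (M.toHSM P).stepRel := by
  induction l generalizing c with
  | nil => exact List.IsChain.nil
  | cons v l ih =>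
    cases l with
    | nil => exact List.isChain_singleton _
    | cons w l =>
      rw [List.isChain_cons_cons] at hl
      refine List.isChain_cons_cons.mpr ⟨stepRel_toHSM_iff.mpr ?_, ih _ hl.2⟩
      rw [proj_liftVertex, proj_liftVertex, ctx_liftVertex, ctx_liftVertex]
      exact ⟨hl.1, rfl⟩

theorem liftSeq_map_proj {l : List (M.toHSM P).Vt} (hl : l.IsChain (M.toHSM P).stepRel)
    (c : Set P) (hc : ∀ a ∈ l.head?, M.ctx P a.1 = c) :
    M.liftSeq P c (l.map (M.proj P)) = l := by
  induction l generalizing c with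
  | nil => rfl
  | cons a l ih =>
    obtain rfl : M.ctx P a.1 = c := hc a rfl
    rw [List.isChain_cons] at hl
    rw [List.map_cons, liftSeq, liftVertex_proj,
      ih hl.2 _ fun b hb => (stepRel_toHSM_iff.mp (hl.1 b hb)).2]

theorem flatLabel_liftSeq (c : Set P) {l : List M.Vt} (hl : l.IsChain M.stepRel)
    (hlast : ∃ x, l.getLast? = some x ∧ M.IsNode x) :
    (M.toHSM P).flatLabel (M.liftSeq P c l) ∩ P = (Subtype.val '' c ∪ M.flatLabel l) ∩ P := by
  induction l generalizing c with
  | nil => simp at hlast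
  | cons v l ih =>
    cases l with
    | nil =>
      obtain ⟨x, hx, hnode : M.expand x.1 x.2 = none⟩ := hlast
      obtain rfl : v = x := by simpa using hx
      rw [liftSeq, liftSeq, flatLabel_cons, label_liftVertex, if_pos hnode, flatLabel_cons]
      simp [flatLabel, Set.union_comm]
    | cons w l =>
      rw [List.isChain_cons_cons] at hl
      rw [List.getLast?_cons_cons] at hlast
      have hbox : M.expand v.1 v.2 ≠ none := by simp [show M.expand v.1 v.2 = some w.1 from hl.1]
      rw [liftSeq, flatLabel_cons, label_liftVertex, if_neg hbox, Set.empty_union,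
        ih _ hl.2 hlast, M.flatLabel_cons v, Set.image_union, Subtype.image_preimage_coe]
      ext p
      simp only [Set.mem_inter_iff, Set.mem_union]
      tauto

theorem complete_map_proj {X : List (M.toHSM P).Vt} (hX : (M.toHSM P).Complete X) :
    M.Complete (X.map (M.proj P)) := by
  obtain ⟨⟨hne, hchain⟩, ⟨x, hx, hxtop⟩, ⟨y, hy, hynode⟩⟩ := hX
  refine ⟨⟨?_, ?_⟩, ⟨M.proj P x, ?_, ?_⟩, ⟨M.proj P y, ?_, ?_⟩⟩
  · exact List.map_eq_nil_iff.not.mpr hne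
  · exact List.isChain_map_of_isChain (R := (M.toHSM P).stepRel) (S := M.stepRel) _
      (fun a b hab => (stepRel_toHSM_iff.mp hab).1) hchain
  · rw [List.head?_map, hx]; rfl
  · show M.base P x.1 = M.top
    rw [hxtop, base_top]
  · rw [List.getLast?_map, hy]; rfl
  · exact (isNode_proj y).mp hynode

theorem complete_liftSeq {L : List M.Vt} (hL : M.Complete L) :
    (M.toHSM P).Complete (M.liftSeq P ∅ L) := by
  obtain ⟨⟨-, hchain⟩, ⟨x, hx, hxtop⟩, ⟨y, hy, hynode⟩⟩ := hL
  obtain ⟨l, rfl⟩ : ∃ l, L = x :: l := ⟨L.tail, (List.eq_cons_of_mem_head? hx)⟩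
  obtain ⟨b, hb, rfl⟩ :
      ∃ b, (M.liftSeq P ∅ (x :: l)).getLast? = some b ∧ M.proj P b = y := by
    rw [← Option.map_eq_some_iff, ← List.getLast?_map, map_proj_liftSeq, hy]
  refine ⟨⟨by simp [liftSeq], isChain_liftSeq ∅ hchain⟩,
    ⟨M.liftVertex P ∅ x, rfl, ?_⟩, ⟨b, hb, (isNode_proj b).mpr hynode⟩⟩
  show M.copy P x.1 ∅ = _
  rw [hxtop, copy_top_empty]

theorem liftSeq_map_proj_of_complete {X : List (M.toHSM P).Vt} (hX : (M.toHSM P).Complete X) :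
    M.liftSeq P ∅ (X.map (M.proj P)) = X := by
  obtain ⟨⟨-, hchain⟩, ⟨x, hx, hxtop⟩, -⟩ := hX
  refine liftSeq_map_proj hchain ∅ fun a ha => ?_
  obtain rfl : a = x := Option.some.inj (ha.symm.trans hx)
  rw [hxtop, ctx_top]

variable (M P) in
noncomputable def statesEquiv : M.States ≃ (M.toHSM P).States where
  toFun L := ⟨M.liftSeq P ∅ L.1, complete_liftSeq L.2⟩
  invFun X := ⟨X.1.map (M.proj P), complete_map_proj X.2⟩
  left_inv L := Subtype.ext (map_proj_liftSeq ∅ L.1)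
  right_inv X := Subtype.ext (liftSeq_map_proj_of_complete X.2)

theorem flatTrans_map_proj {X Y : List (M.toHSM P).Vt} (h : (M.toHSM P).FlatTrans X Y) :
    M.FlatTrans (X.map (M.proj P)) (Y.map (M.proj P)) := by
  rcases h with ⟨p, x, a, b, rfl, rfl, hE, hb⟩ | ⟨p, x, a, b, y, rfl, rfl, hE, hb⟩ |
    ⟨p, x, a, y, z, v, rfl, rfl, hE, hv⟩ | ⟨p, x, a, y, z, b, y', rfl, rfl, hE, hb⟩
  · exact Or.inl ⟨p.map (M.proj P), M.base P x, a, b, List.map_append .., List.map_append .., hE,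
      (isNode_proj ⟨x, b⟩).mp hb⟩
  · exact Or.inr <| Or.inl ⟨p.map (M.proj P), M.base P x, a, b, M.base P y, List.map_append ..,
      List.map_append .., hE, expand_base_eq_some hb⟩
  · exact Or.inr <| Or.inr <| Or.inl ⟨p.map (M.proj P), M.base P x, a, M.base P y, z, v,
      List.map_append .., List.map_append .., hE.2, (isNode_proj ⟨x, v⟩).mp hv⟩
  · exact Or.inr <| Or.inr <| Or.inr ⟨p.map (M.proj P), M.base P x, a, M.base P y, z, b,
      M.base P y', List.map_append .., List.map_append .., hE.2, expand_base_eq_some hb⟩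

theorem flatTrans_liftSeq (c : Set P) {L₁ L₂ : List M.Vt} (h : M.FlatTrans L₁ L₂) :
    (M.toHSM P).FlatTrans (M.liftSeq P c L₁) (M.liftSeq P c L₂) := by
  rcases h with ⟨p, i, a, b, rfl, rfl, hE, hb⟩ | ⟨p, i, a, b, j, rfl, rfl, hE, hb⟩ |
    ⟨p, i, a, j, z, v, rfl, rfl, hE, hv⟩ | ⟨p, i, a, j, z, b, j', rfl, rfl, hE, hb⟩ <;>
  obtain ⟨t, ht⟩ := exists_liftSeq_append c p <;>
  simp only [ht, liftSeq]
  · exact Or.inl ⟨M.liftSeq P c p, M.copy P i t, (M.liftVertex P t ⟨i, a⟩).2,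
      (M.liftVertex P t ⟨i, b⟩).2, rfl, rfl, (eplain_liftVertex t a b).mpr hE,
      (expand_liftVertex t ⟨i, b⟩).trans (by rw [hb]; rfl)⟩
  · refine Or.inr <| Or.inl ⟨M.liftSeq P c p, M.copy P i t, (M.liftVertex P t ⟨i, a⟩).2,
      (M.liftVertex P t ⟨i, b⟩).2, M.copy P j (t ∪ Subtype.val ⁻¹' M.label i b), rfl, ?_,
      (eplain_liftVertex t a b).mpr hE, (expand_liftVertex t ⟨i, b⟩).trans (by rw [hb]; rfl)⟩
    rw [liftVertex_init]; rfl
  · exact Or.inr <| Or.inr <| Or.inl ⟨M.liftSeq P c p, M.copy P i t,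
      (M.liftVertex P t ⟨i, a⟩).2, M.copy P j (t ∪ Subtype.val ⁻¹' M.label i a),
      (M.liftVertex P (t ∪ Subtype.val ⁻¹' M.label i a) ⟨j, z⟩).2,
      (M.liftVertex P t ⟨i, v⟩).2, rfl, rfl, ebox_liftVertex t hE,
      (expand_liftVertex t ⟨i, v⟩).trans (by rw [hv]; rfl)⟩
  · refine Or.inr <| Or.inr <| Or.inr ⟨M.liftSeq P c p, M.copy P i t,
      (M.liftVertex P t ⟨i, a⟩).2, M.copy P j (t ∪ Subtype.val ⁻¹' M.label i a),
      (M.liftVertex P (t ∪ Subtype.val ⁻¹' M.label i a) ⟨j, z⟩).2,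
      (M.liftVertex P t ⟨i, b⟩).2, M.copy P j' (t ∪ Subtype.val ⁻¹' M.label i b), rfl, ?_,
      ebox_liftVertex t hE,
      (expand_liftVertex t ⟨i, b⟩).trans (by rw [hb]; rfl)⟩
    rw [liftVertex_init]; rfl

theorem map_proj_initSeq : (M.toHSM P).initSeq.map (M.proj P) = M.initSeq := by
  show [(⟨M.base P (M.toHSM P).top, M.init (M.base P (M.toHSM P).top)⟩ : M.Vt)] = _
  rw [base_top]
  rfl

theorem flatTrans_liftSeq_iff (c : Set P) {L₁ L₂ : List M.Vt} :
    (M.toHSM P).FlatTrans (M.liftSeq P c L₁) (M.liftSeq P c L₂) ↔ M.FlatTrans L₁ L₂ :=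
  ⟨fun h => by simpa using flatTrans_map_proj h, flatTrans_liftSeq c⟩

theorem flatTrans_statesEquiv_iff (L₁ L₂ : M.States) :
    (M.toHSM P).FlatTrans (M.statesEquiv P L₁).1 (M.statesEquiv P L₂).1 ↔
      M.FlatTrans L₁.1 L₂.1 :=
  flatTrans_liftSeq_iff ∅

theorem flatLabel_statesEquiv (L : M.States) :
    (M.toHSM P).flatLabel (M.statesEquiv P L).1 ∩ P = M.flatLabel L.1 ∩ P := by
  have := flatLabel_liftSeq (P := P) ∅ L.2.1.2 L.2.2.2
  rwa [Set.image_empty, Set.empty_union] at this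

variable (M P)

theorem isHSM_toHSM : (M.toHSM P).IsHSM := by
  intro x u hu
  exact if_neg fun h => hu (Option.map_eq_none_iff.mpr h)

theorem card_Vt_toHSM_le :
    Fintype.card (M.toHSM P).Vt ≤ Fintype.card M.Vt * Nat.card (Set P) := by
  have := Set.ncard_le_ncard_mul_card (s := Set.univ) (t := Set.univ)
    (fun e : (M.toHSM P).Vt => (M.proj P e, M.ctx P e.1))
    ((M.machineEquiv P).symm.sigma_fst_prod_injective M.V).injOn (fun _ _ => trivial)
  simpa [Nat.card_eq_fintype_card] using this

def plainEdges : Set (Σ i : Fin M.h, M.V i × M.V i) := {e | M.Eplain e.1 e.2.1 e.2.2}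

def boxEdges : Set (Σ (i : Fin M.h) (j : Fin M.h), M.V i × M.V j × M.V i) :=
  {e | M.Ebox e.1 e.2.2.1 e.2.1 e.2.2.2.1 e.2.2.2.2}

theorem size_eq : M.size = Fintype.card M.Vt + M.plainEdges.ncard + M.boxEdges.ncard := rfl

theorem ncard_plainEdges_toHSM_le :
    (M.toHSM P).plainEdges.ncard ≤ M.plainEdges.ncard * Nat.card (Set P) :=
  Set.ncard_le_ncard_mul_card (fun e => (⟨M.base P e.1, e.2⟩, M.ctx P e.1))
    ((M.machineEquiv P).symm.sigma_fst_prod_injective (fun i => M.V i × M.V i)).injOn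
    fun _ he => he

theorem ncard_boxEdges_toHSM_le :
    (M.toHSM P).boxEdges.ncard ≤ M.boxEdges.ncard * Nat.card (Set P) := by
  refine Set.ncard_le_ncard_mul_card
    (fun e => (⟨M.base P e.1, M.base P e.2.1, e.2.2⟩, M.ctx P e.1)) ?_ fun _ he => he.2
  rintro ⟨x, y, u, z, v⟩ ⟨hexp, -⟩ ⟨x', y', u', z', v'⟩ ⟨hexp', -⟩ h
  simp only [Prod.mk.injEq] at h
  obtain ⟨hbase, hctx⟩ := h
  obtain rfl : x = x' :=
    (M.machineEquiv P).symm.injective (Prod.ext (congrArg Sigma.fst hbase) hctx)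
  replace hbase := sigma_mk_injective hbase
  obtain rfl : u = u' := congrArg (fun w => w.2.1) hbase
  obtain rfl : y = y' := Option.some.inj (hexp.symm.trans hexp')
  obtain ⟨-, rfl, rfl⟩ := Prod.ext_iff.mp (eq_of_heq (Sigma.mk.inj_iff.mp hbase).2)
  rfl

theorem size_toHSM_le : (M.toHSM P).size ≤ M.size * Nat.card (Set P) := by
  rw [size_eq, size_eq, add_mul, add_mul]
  gcongr
  · exact card_Vt_toHSM_le M P
  · exact ncard_plainEdges_toHSM_le M P
  · exact ncard_boxEdges_toHSM_le M P

end SHSM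

/-- For every SHSM `M` over `AP` and every finite set `P ⊆ AP` of atomic propositions,
there is an HSM `M'` over `AP` with at most `h·2^{|P|}` machines and size at most
`|M|·2^{|P|}` whose flat Kripke structure is isomorphic to `M^F` up to a renaming of the
states, with labels agreeing on all atomic propositions in `P`. -/
theorem shsm_to_hsm {AP : Type} (M : SHSM AP) (P : Set AP) (hP : P.Finite) :
    ∃ M' : SHSM AP, M'.IsHSM ∧
      M'.h ≤ M.h * 2 ^ P.ncard ∧
      M'.size ≤ M.size * 2 ^ P.ncard ∧
      ∃ f : M'.States ≃ M.States,
        f ⟨M'.initSeq, M'.initSeq_complete⟩ = ⟨M.initSeq, M.initSeq_complete⟩ ∧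
        (∀ X Y : M'.States, M'.FlatTrans X.1 Y.1 ↔ M.FlatTrans (f X).1 (f Y).1) ∧
        (∀ X : M'.States, M'.flatLabel X.1 ∩ P = M.flatLabel (f X).1 ∩ P) := by
  have := hP.to_subtype
  have hcard : Nat.card (Set P) = 2 ^ P.ncard := by rw [Nat.card_set, Nat.card_coe_set_eq]
  refine ⟨M.toHSM P, M.isHSM_toHSM P, hcard ▸ le_rfl, hcard ▸ M.size_toHSM_le P,
    (M.statesEquiv P).symm, ?_, ?_, ?_⟩
  · exact Subtype.ext SHSM.map_proj_initSeq
  · simpa only [(M.statesEquiv P).surjective.forall₂, Equiv.symm_apply_apply] using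
      SHSM.flatTrans_statesEquiv_iff
  · simpa only [(M.statesEquiv P).surjective.forall, Equiv.symm_apply_apply] using
      SHSM.flatLabel_statesEquiv
end
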